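/- arXiv:1112.1686 — 4 statements merged into one kernel-verified Lean document; each statement's English description precedes it below -/
import Mathlib

section
/- Let L be a Lie algebra over a field k, let m : L × L → L be an antisymmetric 2-cocycle in the adjoint representation (i.e. the Chevalley–Eilenberg differential of m vanishes), and let M : L → L be linear with coboundary dM(x,y) = [M x, y] + [x, M y] − M[x,y]. Define the symmetrized Jacobiator J(p,q)(x,y,z) = p(q(x,y),z) + q(p(x,y),z) + p(q(y,z),x) + q(p(y,z),x) + p(q(z,x),y) + q(p(z,x),y) for antisymmetric bilinear maps p, q. Then J(m, dM) = J([·,·], U), where U(x,y) = M(m(x,y)) − m(M x, y) − m(x, M y). -/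
noncomputable section

/-- Symmetrized Jacobiator of two antisymmetric bilinear maps. -/
def Jac {L : Type*} [AddCommGroup L] (p q : L → L → L) (x y z : L) : L :=
  p (q x y) z + q (p x y) z + p (q y z) x + q (p y z) x + p (q z x) y + q (p z x) y

/-- Coboundary of a 1-cochain in the adjoint representation. -/
def dM {k : Type*} {L : Type*} [Field k] [LieRing L] [LieAlgebra k L]
    (M : L →ₗ[k] L) (x y : L) : L :=
  ⁅M x, y⁆ + ⁅x, M y⁆ - M ⁅x, y⁆

/-- for a 2-cocycle m and a 1-cochain M,
J(m, dM) = J([·,·], U) with U(x,y) = M(m(x,y)) − m(Mx,y) − m(x,My). -/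
theorem jacobiator_of_cocycle_and_coboundary
    {k : Type*} {L : Type*} [Field k] [LieRing L] [LieAlgebra k L]
    (m : L →ₗ[k] L →ₗ[k] L)
    (hanti : ∀ x y, m x y = -m y x)
    (hcocycle : ∀ x y z : L,
      ⁅m x y, z⁆ + m ⁅x, y⁆ z + ⁅m y z, x⁆ + m ⁅y, z⁆ x + ⁅m z x, y⁆ + m ⁅z, x⁆ y = 0)
    (M : L →ₗ[k] L) :
    ∀ x y z : L,
      Jac (fun a b => m a b) (dM M) x y z =
        Jac (fun a b => ⁅a, b⁆)
          (fun a b => M (m a b) - m (M a) b - m a (M b)) x y z := by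
  intro x y z
  have h1 := hcocycle (M x) y z
  have h2 := hcocycle x (M y) z
  have h3 := hcocycle x y (M z)
  have h4 := congrArg M (hcocycle x y z)
  simp only [map_add, map_zero] at h4
  simp only [Jac, dM, map_add, map_sub, LinearMap.add_apply, LinearMap.sub_apply, add_lie, sub_lie, lie_add, lie_sub]
  linear_combination (norm := module) h1 + h2 + h3 - h4
end
end

section
/- The bilinear form m₃(f,g) = (−1)^{ε(f)} f₁·g₁ on DE (where f₁ = (1 − ξ∂_ξ)f is the ξ-independent part of f and ε is the Grassmann parity), with values in DE (as the element (0, f₁g₁) up to sign), is a 2-cocycle of the antibracket in the adjoint representation. In particular, for f = ξf₀, g = g₁, h = h₁ (homogeneous sectors) the cocycle condition reduces to the Leibniz identity −(g₁h₁)′f₀ + h₁′g₁f₀ + g₁′h₁f₀ = 0. -/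
noncomputable section

abbrev Fn := ℝ → ℝ
abbrev DE := Fn × Fn

def B (f g : DE) : DE :=
  (fun x => deriv f.1 x * g.1 x - f.1 x * deriv g.1 x,
   fun x => deriv f.2 x * g.1 x - f.1 x * deriv g.2 x)

/-- Homogeneous element: `el true u = ξu` (Grassmann parity ε = 1),
`el false u = u` (ε = 0). -/
def el (p : Bool) (u : Fn) : DE := if p then (u, (0 : Fn)) else ((0 : Fn), u)

/-- Grassmann parity ε as a natural number. -/
def epsG (p : Bool) : ℕ := if p then 1 else 0

/-- Shifted parity ϵ = ε + 1. -/
def epsS (p : Bool) : ℕ := epsG p + 1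

/-- Grassmann parity of the bracket: ε([f,g]) = ε(f)+ε(g)+1. -/
def brP (p q : Bool) : Bool := p == q

/-- m₃(f,g) = (−1)^{ε(f)} (1−N_ξ)f · (1−N_ξ)g, with values in DE. -/
def m3 (p : Bool) (f g : DE) : DE :=
  ((-1 : ℝ) ^ epsG p) • ((((0 : Fn), fun x => f.2 x * g.2 x)) : DE)

/-- m₃ is a 2-cocycle of the antibracket in the adjoint
representation: d₂m₃(f,g,h) = −(−1)^{ϵ(f)ϵ(h)}([m₃(f,g),h] + m₃([f,g],h)) − cyclic
vanishes on homogeneous elements; in particular, for f = ξf₀, g = g₁, h = h₁ the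
condition reduces to the Leibniz identity −(g₁h₁)′f₀ + h₁′g₁f₀ + g₁′h₁f₀ = 0. -/
theorem m3_is_cocycle :
    (∀ (pf pg ph : Bool) (u v w : Fn),
      ContDiff ℝ (⊤ : ℕ∞) u → ContDiff ℝ (⊤ : ℕ∞) v → ContDiff ℝ (⊤ : ℕ∞) w →
      -(((-1 : ℝ) ^ (epsS pf * epsS ph)) •
          (B (m3 pf (el pf u) (el pg v)) (el ph w) +
           m3 (brP pf pg) (B (el pf u) (el pg v)) (el ph w)))
      - (((-1 : ℝ) ^ (epsS pg * epsS pf)) •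
          (B (m3 pg (el pg v) (el ph w)) (el pf u) +
           m3 (brP pg ph) (B (el pg v) (el ph w)) (el pf u)))
      - (((-1 : ℝ) ^ (epsS ph * epsS pg)) •
          (B (m3 ph (el ph w) (el pf u)) (el pg v) +
           m3 (brP ph pf) (B (el ph w) (el pf u)) (el pg v))) = 0) ∧
    (∀ f₀ g₁ h₁ : Fn, ContDiff ℝ (⊤ : ℕ∞) f₀ → ContDiff ℝ (⊤ : ℕ∞) g₁ → ContDiff ℝ (⊤ : ℕ∞) h₁ →
      ∀ x : ℝ, -(deriv (fun y => g₁ y * h₁ y) x) * f₀ x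
          + deriv h₁ x * g₁ x * f₀ x + deriv g₁ x * h₁ x * f₀ x = 0) := by
  constructor
  · intro pf pg ph u v w hu hv hw
    have du : Differentiable ℝ u := hu.differentiable (by simp)
    have dv : Differentiable ℝ v := hv.differentiable (by simp)
    have dw : Differentiable ℝ w := hw.differentiable (by simp)
    cases pf <;> cases pg <;> cases ph <;>
      simp only [B, m3, el, epsG, epsS, brP, Prod.ext_iff, Prod.smul_mk, Prod.mk_add_mk,
        Prod.neg_mk, Prod.mk_sub_mk, Prod.mk_eq_zero, if_true, if_false, Bool.true_eq_false,
        Bool.false_eq_true, cond] <;>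
      constructor <;> funext x <;>
      simp [deriv_const_mul_field', Pi.smul_apply, smul_eq_mul, Pi.neg_def, neg_zero,
        deriv_const', Pi.zero_def, deriv_fun_mul (du x) (dv x), deriv_fun_mul (dv x) (dw x),
        deriv_fun_mul (dw x) (du x), deriv_fun_mul (du x) (dw x), deriv_fun_mul (dv x) (du x),
        deriv_fun_mul (dw x) (dv x)] <;>
      ring
  · intro f₀ g₁ h₁ hf hg hh x
    rw [deriv_fun_mul ((hg.differentiable (by simp)) x) ((hh.differentiable (by simp)) x)]
    ring
end
end

section
/- The Jacobi identity for the antibracket on DE holds in the graded cyclic form: for homogeneous f, g, h ∈ DE with shifted parities ϵ(f), ϵ(g), ϵ(h) (ϵ = ε + 1, where ε(ξf₀) = 1 and ε(f₁) = 0), one has (−1)^{ϵ(f)ϵ(h)}[[f,g],h] + (−1)^{ϵ(g)ϵ(f)}[[g,h],f] + (−1)^{ϵ(h)ϵ(g)}[[h,f],g] = 0. -/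
noncomputable section

/-- Shifted parity ϵ = ε + 1. -/
def eps (p : Bool) : ℕ := if p then 0 else 1

lemma deriv_zero_fn : deriv (0 : ℝ → ℝ) = fun _ => (0:ℝ) := by
  funext x; exact deriv_const x 0

lemma derivB (a b : ℝ → ℝ) (ha : ContDiff ℝ (⊤ : ℕ∞) a) (hb : ContDiff ℝ (⊤ : ℕ∞) b) :
    deriv (fun x => deriv a x * b x - a x * deriv b x)
    = fun x => deriv (deriv a) x * b x - a x * deriv (deriv b) x := by
  have da : Differentiable ℝ a := ha.differentiable (by simp)
  have db : Differentiable ℝ b := hb.differentiable (by simp)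
  have da' : Differentiable ℝ (deriv a) :=
    ((contDiff_infty_iff_deriv.mp (ha.of_le (by simp))).2).differentiable (by simp)
  have db' : Differentiable ℝ (deriv b) :=
    ((contDiff_infty_iff_deriv.mp (hb.of_le (by simp))).2).differentiable (by simp)
  funext x
  rw [deriv_fun_sub ((da'.fun_mul db).differentiableAt) ((da.fun_mul db').differentiableAt),
      deriv_fun_mul da'.differentiableAt db.differentiableAt,
      deriv_fun_mul da.differentiableAt db'.differentiableAt]
  ring

lemma derivMu (a b : ℝ → ℝ) (ha : ContDiff ℝ (⊤ : ℕ∞) a) (hb : ContDiff ℝ (⊤ : ℕ∞) b) :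
    deriv (fun x => deriv a x * b x)
    = fun x => deriv (deriv a) x * b x + deriv a x * deriv b x := by
  have db : Differentiable ℝ b := hb.differentiable (by simp)
  have da' : Differentiable ℝ (deriv a) :=
    ((contDiff_infty_iff_deriv.mp (ha.of_le (by simp))).2).differentiable (by simp)
  funext x
  rw [deriv_fun_mul da'.differentiableAt db.differentiableAt]

lemma derivMu2 (a b : ℝ → ℝ) (ha : ContDiff ℝ (⊤ : ℕ∞) a) (hb : ContDiff ℝ (⊤ : ℕ∞) b) :
    deriv (fun x => a x * deriv b x)
    = fun x => deriv a x * deriv b x + a x * deriv (deriv b) x := by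
  have da : Differentiable ℝ a := ha.differentiable (by simp)
  have db' : Differentiable ℝ (deriv b) :=
    ((contDiff_infty_iff_deriv.mp (hb.of_le (by simp))).2).differentiable (by simp)
  funext x
  rw [deriv_fun_mul da.differentiableAt db'.differentiableAt]

lemma derivMu2n (a b : ℝ → ℝ) (ha : ContDiff ℝ (⊤ : ℕ∞) a) (hb : ContDiff ℝ (⊤ : ℕ∞) b) :
    deriv (fun x => -(a x * deriv b x))
    = fun x => -(deriv a x * deriv b x + a x * deriv (deriv b) x) := by
  funext x
  rw [show (fun x => -(a x * deriv b x)) = fun x => -((fun y => a y * deriv b y) x) from rfl,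
    deriv.fun_neg, derivMu2 a b ha hb]

/-- the graded cyclic Jacobi identity
(−1)^{ϵ(f)ϵ(h)}[[f,g],h] + (−1)^{ϵ(g)ϵ(f)}[[g,h],f] + (−1)^{ϵ(h)ϵ(g)}[[h,f],g] = 0. -/
theorem graded_jacobi (pf pg ph : Bool) (u v w : Fn)
    (hu : ContDiff ℝ (⊤ : ℕ∞) u) (hv : ContDiff ℝ (⊤ : ℕ∞) v) (hw : ContDiff ℝ (⊤ : ℕ∞) w) :
    ((-1 : ℝ) ^ (eps pf * eps ph)) • B (B (el pf u) (el pg v)) (el ph w) +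
    ((-1 : ℝ) ^ (eps pg * eps pf)) • B (B (el pg v) (el ph w)) (el pf u) +
    ((-1 : ℝ) ^ (eps ph * eps pg)) • B (B (el ph w) (el pf u)) (el pg v) = 0 := by
  cases pf <;> cases pg <;> cases ph <;>
  · refine Prod.ext ?_ ?_ <;> funext x <;>
    · simp only [B, el, eps, if_true, if_false, Bool.false_eq_true, pow_zero, pow_one,
        mul_zero, mul_one, zero_mul, one_mul, Nat.mul_zero, Nat.zero_mul, Nat.mul_one,
        Nat.one_mul, Prod.smul_fst, Prod.smul_snd,
        Prod.fst_add, Prod.snd_add, Pi.add_apply, Pi.smul_apply, smul_eq_mul,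
        Pi.zero_apply, deriv_zero_fn, deriv_const', sub_zero, zero_sub, sub_self, neg_zero,
        derivB u v hu hv, derivB v w hv hw, derivB w u hw hu,
        derivB u w hu hw, derivB v u hv hu, derivB w v hw hv,
        derivMu u v hu hv, derivMu v w hv hw, derivMu w u hw hu,
        derivMu u w hu hw, derivMu v u hv hu, derivMu w v hw hv,
        derivMu2 u v hu hv, derivMu2 v w hv hw, derivMu2 w u hw hu,
        derivMu2 u w hu hw, derivMu2 v u hv hu, derivMu2 w v hw hv,
        derivMu2n u v hu hv, derivMu2n v w hv hw, derivMu2n w u hw hu,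
        derivMu2n u w hu hw, derivMu2n v u hv hu, derivMu2n w v hw hv,
        Prod.fst_zero, Prod.snd_zero]
      ring
end
end

section
/- The bilinear form m₄(f,g) = (−1)^{ε(f)}(Δf)·(Eg) + (Ef)·(Δg) on DE, where Δ(ξf₀+f₁) = f₀′ and E = 1 − (x∂ₓ + ξ∂_ξ)/2, is a 2-cocycle of the antibracket in the adjoint representation: the Chevalley–Eilenberg differential d₂m₄ vanishes. -/
noncomputable section

/-- Supercommutative product: (f₀,f₁)·(g₀,g₁) = (f₀g₁ + g₀f₁, f₁g₁). -/
def superMul (a b : DE) : DE :=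
  (fun x => a.1 x * b.2 x + b.1 x * a.2 x, fun x => a.2 x * b.2 x)

/-- The odd Laplacian Δ(ξf₀+f₁) = f₀′. -/
def Delta (a : DE) : DE := ((0 : Fn), deriv a.1)

/-- E = 1 − (x∂ₓ + ξ∂_ξ)/2. -/
def Eop (a : DE) : DE :=
  (fun x => (a.1 x - x * deriv a.1 x) / 2, fun x => a.2 x - x * deriv a.2 x / 2)

/-- m₄(f,g) = (−1)^{ε(f)}(Δf)·(Eg) + (Ef)·(Δg). -/
def m4 (p : Bool) (f g : DE) : DE :=
  ((-1 : ℝ) ^ epsG p) • superMul (Delta f) (Eop g) + superMul (Eop f) (Delta g)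


lemma pi_add (f g : Fn) : f + g = fun x => f x + g x := rfl
lemma pi_neg (f : Fn) : -f = fun x => -f x := rfl
lemma fn_zero : (0:Fn) = fun _ => (0:ℝ) := rfl
lemma n1p2 : ((-1:ℝ))^(2:ℕ) = 1 := by norm_num
lemma n1p4 : ((-1:ℝ))^(4:ℕ) = 1 := by norm_num

set_option maxHeartbeats 2000000

/-- m₄ is a 2-cocycle of the antibracket in the adjoint
representation: d₂m₄(f,g,h) = −(−1)^{ϵ(f)ϵ(h)}([m₄(f,g),h] + m₄([f,g],h)) +
graded cyclic permutations vanishes on homogeneous elements. -/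
theorem m4_is_cocycle (pf pg ph : Bool) (u v w : Fn)
    (hu : ContDiff ℝ (⊤ : ℕ∞) u) (hv : ContDiff ℝ (⊤ : ℕ∞) v) (hw : ContDiff ℝ (⊤ : ℕ∞) w) :
    -(((-1 : ℝ) ^ (epsS pf * epsS ph)) •
        (B (m4 pf (el pf u) (el pg v)) (el ph w) +
         m4 (brP pf pg) (B (el pf u) (el pg v)) (el ph w)))
    - (((-1 : ℝ) ^ (epsS pg * epsS pf)) •
        (B (m4 pg (el pg v) (el ph w)) (el pf u) +
         m4 (brP pg ph) (B (el pg v) (el ph w)) (el pf u)))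
    - (((-1 : ℝ) ^ (epsS ph * epsS pg)) •
        (B (m4 ph (el ph w) (el pf u)) (el pg v) +
         m4 (brP ph pf) (B (el ph w) (el pf u)) (el pg v))) = 0 := by
  obtain ⟨u, rfl⟩ : ∃ a : ℝ → ℝ, a = u := ⟨u, rfl⟩
  obtain ⟨v, rfl⟩ : ∃ a : ℝ → ℝ, a = v := ⟨v, rfl⟩
  obtain ⟨w, rfl⟩ : ∃ a : ℝ → ℝ, a = w := ⟨w, rfl⟩
  have hu' : ContDiff ℝ ((⊤:ℕ∞) : WithTop ℕ∞) u := hu.of_le (by simp)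
  have hv' : ContDiff ℝ ((⊤:ℕ∞) : WithTop ℕ∞) v := hv.of_le (by simp)
  have hw' : ContDiff ℝ ((⊤:ℕ∞) : WithTop ℕ∞) w := hw.of_le (by simp)
  have hu2 : ContDiff ℝ ((⊤:ℕ∞) : WithTop ℕ∞) (deriv u) := (contDiff_infty_iff_deriv.mp hu').2
  have hv2 : ContDiff ℝ ((⊤:ℕ∞) : WithTop ℕ∞) (deriv v) := (contDiff_infty_iff_deriv.mp hv').2
  have hw2 : ContDiff ℝ ((⊤:ℕ∞) : WithTop ℕ∞) (deriv w) := (contDiff_infty_iff_deriv.mp hw').2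
  have Du : Differentiable ℝ u := hu'.differentiable (by simp)
  have Dv : Differentiable ℝ v := hv'.differentiable (by simp)
  have Dw : Differentiable ℝ w := hw'.differentiable (by simp)
  have Du' : Differentiable ℝ (deriv u) := hu2.differentiable (by simp)
  have Dv' : Differentiable ℝ (deriv v) := hv2.differentiable (by simp)
  have Dw' : Differentiable ℝ (deriv w) := hw2.differentiable (by simp)
  cases pf <;> cases pg <;> cases ph <;>
  · apply Prod.ext <;> funext x <;>
    · simp only [m4, B, Delta, Eop, superMul, el, epsG, epsS, brP,
        if_true, if_false, beq_self_eq_true, eq_self_iff_true, reduceIte, Nat.reduceAdd, Nat.reduceMul, Nat.reducePow, n1p2, n1p4, Bool.false_eq_true, Bool.true_eq_false, neg_neg, beq_iff_eq, pi_add, pi_neg, fn_zero,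
        deriv.neg, neg_one_smul, deriv_const, pow_one, pow_zero, one_smul, neg_smul,
        Prod.fst_add, Prod.snd_add, Prod.fst_neg, Prod.snd_neg, Prod.smul_fst, Prod.smul_snd,
        Prod.fst_sub, Prod.snd_sub, Prod.fst_zero, Prod.snd_zero,
        Pi.add_apply, Pi.sub_apply, Pi.neg_apply, Pi.smul_apply, Pi.zero_apply, smul_eq_mul,
        zero_mul, mul_zero, add_zero, zero_add, deriv_const',
        neg_zero, sub_zero, zero_sub, mul_one, one_mul]
      try simp (disch := fun_prop) only [deriv_add, deriv_sub, deriv_mul, deriv_fun_add, deriv_fun_sub, deriv_fun_mul, deriv_const, zero_div, deriv.fun_neg, deriv_div_const,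
        deriv_id'', deriv.neg, deriv_const', zero_mul, mul_zero, add_zero, zero_add,
        neg_zero, sub_zero, mul_one, one_mul]
      try ring
end
end
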